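/- Let H be a separable Hilbert space, D = D* with compact resolvent, {h_m} an orthonormal eigenbasis of D, and U : H → L²(F,μ) a unitary. Let g be a bounded Borel function such that g(D) is Hilbert–Schmidt, and let f be a measurable function on F. Then T_f g(D) (defined on the span of the h_m) extends to a Hilbert–Schmidt operator if and only if f ∈ L²(F,μ₂), and in that case ‖T_f g(D)‖₂ = ‖f‖_{L²(F,μ₂)}. -/

import Mathlib

open MeasureTheory Filter Topology ComplexConjugate
open scoped ENNReal NNReal InnerProductSpace RealInnerProductSpace

noncomputable section

namespace NCG

variable {H : Type*} [NormedAddCommGroup H] [InnerProductSpace ℂ H] [CompleteSpace H]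

/-- `sv T n` : the `n`-th approximation number of `T`; for compact `T` this is the
`(n+1)`-st singular value `μ_{n+1}(T)` of the paper. -/
def sv (T : H →L[ℂ] H) (n : ℕ) : ℝ :=
  sInf { c | ∃ S : H →L[ℂ] H, Module.rank ℂ (LinearMap.range (S : H →ₗ[ℂ] H)) ≤ n ∧ c = ‖T - S‖ }

/-- `gam T k = (log (1+(k+1)))⁻¹ * ∑_{n=1}^{k+1} μ_n(T)` : the sequence `γ(T)` of the paper,
with the `0`-indexing `gam T k = γ(T)_{k+1}`. -/
def gam (T : H →L[ℂ] H) (k : ℕ) : ℝ :=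
  (Real.log ((k : ℝ) + 2))⁻¹ * ∑ n ∈ Finset.range (k + 1), sv T n

/-- membership in the ideal `𝓛^{1,∞}`. -/
def MemL1Inf (T : H →L[ℂ] H) : Prop :=
  IsCompactOperator T ∧ BddAbove (Set.range (gam T))

/-- the norm `‖T‖_{1,∞}`. -/
def norm1Inf (T : H →L[ℂ] H) : ℝ := ⨆ k, gam T k

/-- membership in `𝓛^{1,∞}_0`, i.e. `limsup_k γ(T)_k = 0`. -/
def MemL1Inf0 (T : H →L[ℂ] H) : Prop :=
  IsCompactOperator T ∧ Tendsto (gam T) atTop (𝓝 0)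

/-- the seminorm `‖T‖₀ = inf { ‖T - V‖_{1,∞} : V ∈ 𝓛^{1,∞}_0 }`. -/
def norm0 (T : H →L[ℂ] H) : ℝ :=
  sInf { c | ∃ V : H →L[ℂ] H, MemL1Inf0 V ∧ c = norm1Inf (T - V) }

/-- trace class operators `𝓛¹`. -/
def MemTraceClass (T : H →L[ℂ] H) : Prop :=
  IsCompactOperator T ∧ Summable (sv T)

/-- the Schatten class `𝓛^p`. -/
def MemSchatten (p : ℝ) (T : H →L[ℂ] H) : Prop :=
  IsCompactOperator T ∧ Summable (fun n => sv T n ^ p)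

/-- `zeta T s = Tr(|T|^s) = ∑_n μ_n(T)^s`. -/
def zeta (T : H →L[ℂ] H) (s : ℝ) : ℝ := ∑' n, sv T n ^ s

/-- `‖T‖_{Z₁} = limsup_{s→1⁺} (s-1) (Tr |T|^s)^{1/s}`. -/
def normZ1 (T : H →L[ℂ] H) : ℝ :=
  limsup (fun s : ℝ => (s - 1) * zeta T s ^ (1 / s)) (𝓝[>] (1 : ℝ))

/-- a bounded sequence (i.e. an element of `ℓ^∞`). -/
def Bdd (a : ℕ → ℝ) : Prop := ∃ C, ∀ k, |a k| ≤ C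

/-- A generalized limit: a state on `ℓ^∞` squeezed between `liminf` and `limsup` on
(bounded) positive sequences.  We realise functionals on `ℓ^∞` as linear functionals on the
space of all sequences; only their values on bounded sequences are ever used. -/
def IsGenLim (ω : (ℕ → ℝ) →ₗ[ℝ] ℝ) : Prop :=
  (ω fun _ => 1) = 1 ∧
  ∀ a : ℕ → ℝ, (∀ k, 0 ≤ a k) → Bdd a →
    liminf a atTop ≤ ω a ∧ ω a ≤ limsup a atTop

/-- A Banach limit: a shift-invariant generalized limit (the class `BL`). -/
def IsBanachLim (ω : (ℕ → ℝ) →ₗ[ℝ] ℝ) : Prop :=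
  IsGenLim ω ∧ ∀ a : ℕ → ℝ, Bdd a → ∀ j : ℕ, (ω fun k => a (k + j)) = ω a

/-- A dilation-invariant generalized limit (the class `DL`);
in the `0`-indexed picture `(D_j a)_k = a_{⌈(k+1)/j⌉ - 1} = a_{k / j}` (ℕ-division). -/
def IsDilLim (ω : (ℕ → ℝ) →ₗ[ℝ] ℝ) : Prop :=
  IsGenLim ω ∧ ∀ a : ℕ → ℝ, Bdd a → ∀ j : ℕ, 1 ≤ j → (ω fun k => a (k / j)) = ω a

/-- The class `DL₂` (relative to the Hilbert space `H`): generalized limits that are invariant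
under the dilation `D₂` on the sequences `γ(T)`, `0 ≤ T ∈ 𝓛^{1,∞}`. -/
def IsDL2 (H : Type*) [NormedAddCommGroup H] [InnerProductSpace ℂ H] [CompleteSpace H]
    (ω : (ℕ → ℝ) →ₗ[ℝ] ℝ) : Prop :=
  IsGenLim ω ∧
  ∀ T : H →L[ℂ] H, T.IsPositive → MemL1Inf T →
    (ω fun k => gam T (k / 2)) = ω (gam T)

/-- `Φ` is (an extension to `B(H)` of) the Dixmier trace `Tr_ω`: a linear functional agreeing
with `T ↦ ω(γ(T))` on positive elements of `𝓛^{1,∞}`.  Any such `Φ` agrees with `Tr_ω` on all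
of `𝓛^{1,∞}`. -/
def IsDixTr (ω : (ℕ → ℝ) →ₗ[ℝ] ℝ) (Φ : (H →L[ℂ] H) →ₗ[ℂ] ℂ) : Prop :=
  ∀ T : H →L[ℂ] H, T.IsPositive → MemL1Inf T → Φ T = (ω (gam T) : ℂ)

/-- `T` is measurable in the sense of Connes (`T` positive case). -/
def ConnesMeasurable (T : H →L[ℂ] H) : Prop :=
  ∃ c : ℝ, ∀ ω : (ℕ → ℝ) →ₗ[ℝ] ℝ, IsDL2 H ω → ω (gam T) = c

/-- The transform `𝓛(ω) = ω ∘ E ∘ L⁻¹ ∘ p` of the paper, in the `0`-indexed picture: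
`(E(L⁻¹(p(a))))_{k+1} = ∫_k^{k+1} a_{⌊e^t⌋} dt`. -/
def LTrans (a : ℕ → ℝ) : ℕ → ℝ := fun k => ∫ t in (k : ℝ)..((k : ℝ) + 1), a (⌊Real.exp t⌋₊ - 1)


variable {F : Type*} [MeasurableSpace F] {μ : Measure F}

/-- `𝓕_D(w)(x) = ∑_m w(λ_m) |(U h_m)(x)|²` (real-valued weights). -/
def FDr (h : ℕ → H) (lam : ℕ → ℝ) (U : H ≃ₗᵢ[ℂ] Lp ℂ 2 μ) (w : ℝ → ℝ) (x : F) : ℝ :=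
  ∑' m, w (lam m) * ‖(U (h m) : F → ℂ) x‖ ^ 2

/-- `𝓕_D(g)(x)` for complex `g`. -/
def FDc (h : ℕ → H) (lam : ℕ → ℝ) (U : H ≃ₗᵢ[ℂ] Lp ℂ 2 μ) (g : ℝ → ℂ) (x : F) : ℂ :=
  ∑' m, g (lam m) * (‖(U (h m) : F → ℂ) x‖ : ℂ) ^ 2

/-- the measure on `F` with density `𝓕_D(w)` with respect to `μ`. -/
def densMeas (h : ℕ → H) (lam : ℕ → ℝ) (U : H ≃ₗᵢ[ℂ] Lp ℂ 2 μ) (w : ℝ → ℝ) : Measure F :=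
  μ.withDensity fun x => ENNReal.ofReal (FDr h lam U w x)

/-- `S` is (the bounded closure of) the densely defined operator `T_f g(D)`,
where `g(D) h_m = g(λ_m) h_m` and `T_f = U* M_f U`. -/
def ExtMulDiag (h : ℕ → H) (lam : ℕ → ℝ) (U : H ≃ₗᵢ[ℂ] Lp ℂ 2 μ) (g : ℝ → ℂ) (f : F → ℂ)
    (S : H →L[ℂ] H) : Prop :=
  ∀ m, (U (S (h m)) : F → ℂ) =ᵐ[μ] fun x => g (lam m) * (f x * (U (h m) : F → ℂ) x)

/-- `P = T_{χ_J} = U* M_{χ_J} U` is the multiplication projection by the set `J`. -/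
def IsMulProj (U : H ≃ₗᵢ[ℂ] Lp ℂ 2 μ) (J : Set F) (P : H →L[ℂ] H) : Prop :=
  ∀ ψ : H, (U (P ψ) : F → ℂ) =ᵐ[μ] J.indicator (U ψ : F → ℂ)

/-- `S` is the operator `g(D)^{1/2} T_f g(D)^{1/2}` read through its matrix elements in the
eigenbasis `h`. -/
def ExtSymDiag (h : ℕ → H) (lam : ℕ → ℝ) (U : H ≃ₗᵢ[ℂ] Lp ℂ 2 μ) (g : ℝ → ℝ) (f : F → ℂ)
    (S : H →L[ℂ] H) : Prop :=
  ∀ j m : ℕ, (inner ℂ (h j) (S (h m)) : ℂ) =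
    (Real.sqrt (g (lam j)) * Real.sqrt (g (lam m)) : ℝ) *
      ∫ x, f x * (U (h m) : F → ℂ) x * (starRingEnd ℂ) ((U (h j) : F → ℂ) x) ∂μ

/-- Hilbert–Schmidt relative to an orthonormal basis `h`. -/
def MemHS (h : ℕ → H) (T : H →L[ℂ] H) : Prop :=
  Summable fun m => ‖T (h m)‖ ^ 2

/-- the Hilbert–Schmidt norm. -/
def normHS (h : ℕ → H) (T : H →L[ℂ] H) : ℝ :=
  Real.sqrt (∑' m, ‖T (h m)‖ ^ 2)

/-- the trace relative to an orthonormal basis `h`. -/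
def traceIn (h : ℕ → H) (T : H →L[ℂ] H) : ℂ := ∑' m, (inner ℂ (h m) (T (h m)) : ℂ)

/-- the `‖·‖_{1,∞,p}` norm with respect to the family of measures `s ↦ ν s` :
`sup_{1<s≤2} (s-1)^{1/p} ‖f‖_{L^p(ν s)}`. -/
def normOneInfP (ν : ℝ → Measure F) (p : ℝ≥0∞) (f : F → ℂ) : ℝ :=
  sSup { c | ∃ s : ℝ, 1 < s ∧ s ≤ 2 ∧
    c = (s - 1) ^ (1 / p.toReal) * (eLpNorm f p (ν s)).toReal }

/-- membership in `L^p(F, μ_{1,∞})`. -/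
def MemLpOneInf (ν : ℝ → Measure F) (p : ℝ≥0∞) (f : F → ℂ) : Prop :=
  (∀ s : ℝ, 1 < s → MemLp f p (ν s)) ∧
  BddAbove { c | ∃ s : ℝ, 1 < s ∧ s ≤ 2 ∧
    c = (s - 1) ^ (1 / p.toReal) * (eLpNorm f p (ν s)).toReal }

/-- membership in `L^p₀(F, μ_{1,∞})`: the closure of the (measurable) step functions in the
`‖·‖_{1,∞,p}` norm. -/
def MemLp0OneInf (ν : ℝ → Measure F) (p : ℝ≥0∞) (f : F → ℂ) : Prop :=
  MemLpOneInf ν p f ∧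
  ∀ ε > (0 : ℝ), ∃ φ : SimpleFunc F ℂ, ∀ s : ℝ, 1 < s → s ≤ 2 →
    (s - 1) ^ (1 / p.toReal) * (eLpNorm (f - ⇑φ) p (ν s)).toReal ≤ ε

/-- membership in `L^∞(F, μ_{1,∞})`. -/
def MemLInfOneInf (ν : ℝ → Measure F) (f : F → ℂ) : Prop :=
  (∀ s : ℝ, 1 < s → MemLp f ⊤ (ν s)) ∧
  BddAbove { c | ∃ s : ℝ, 1 < s ∧ s ≤ 2 ∧ c = (eLpNorm f ⊤ (ν s)).toReal }

end NCG

/-!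
Since `U` is unitary and `|g(λ_m)|² |U h_m|²` sums to the density of `μ₂`, Tonelli gives
`∫ |f|² dμ₂ = ∑_m ∫ |g(λ_m) f (U h_m)|² dμ = ∑_m ‖T_f g(D) h_m‖²`.
Conversely, if the right-hand side is finite, the vectors `U* (g(λ_m) f U h_m)` are
square-summable, and an orthonormal family can be sent to any square-summable family by a
bounded operator (Bessel plus Cauchy–Schwarz), which is the required extension.
-/

section SquareSummable

variable {ι E : Type*} [SeminormedAddCommGroup E]

theorem ofReal_tsum_norm_sq {x : ι → E} (hx : Summable fun i => ‖x i‖ ^ 2) :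
    ENNReal.ofReal (∑' i, ‖x i‖ ^ 2) = ∑' i, ‖x i‖ₑ ^ 2 := by
  rw [ENNReal.ofReal_tsum_of_nonneg (fun i => by positivity) hx]
  simp [ENNReal.ofReal_pow, ofReal_norm]

theorem summable_norm_sq_iff_tsum_enorm_sq_ne_top {x : ι → E} :
    Summable (fun i => ‖x i‖ ^ 2) ↔ ∑' i, ‖x i‖ₑ ^ 2 ≠ ∞ :=
  ⟨fun hx => ofReal_tsum_norm_sq hx ▸ ENNReal.ofReal_ne_top,
    fun hx => by simpa using ENNReal.summable_toReal hx⟩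

end SquareSummable

namespace Orthonormal

variable {ι 𝕜 E E' : Type*} [RCLike 𝕜] [NormedAddCommGroup E] [InnerProductSpace 𝕜 E]
  [NormedAddCommGroup E'] {e : ι → E}

theorem sum_norm_inner_mul_norm_le (he : Orthonormal 𝕜 e) {v : ι → E'}
    (hv : Summable fun i => ‖v i‖ ^ 2) (x : E) (s : Finset ι) :
    ∑ i ∈ s, ‖⟪e i, x⟫_𝕜‖ * ‖v i‖ ≤ √(∑' i, ‖v i‖ ^ 2) * ‖x‖ := by
  calc ∑ i ∈ s, ‖⟪e i, x⟫_𝕜‖ * ‖v i‖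
      ≤ √(∑ i ∈ s, ‖⟪e i, x⟫_𝕜‖ ^ 2) * √(∑ i ∈ s, ‖v i‖ ^ 2) :=
        Real.sum_mul_le_sqrt_mul_sqrt _ _ _
    _ ≤ √(‖x‖ ^ 2) * √(∑' i, ‖v i‖ ^ 2) := by
        gcongr
        · exact he.sum_inner_products_le x
        · exact hv.sum_le_tsum s fun i _ => by positivity
    _ = √(∑' i, ‖v i‖ ^ 2) * ‖x‖ := by rw [Real.sqrt_sq (norm_nonneg x), mul_comm]

variable [NormedSpace 𝕜 E'] [CompleteSpace E']

/-- The operator is `x ↦ ∑ i, ⟪e i, x⟫ • v i`; it is bounded by `(∑ i, ‖v i‖²)^{1/2}`. -/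
theorem exists_continuousLinearMap_apply_eq (he : Orthonormal 𝕜 e) {v : ι → E'}
    (hv : Summable fun i => ‖v i‖ ^ 2) : ∃ S : E →L[𝕜] E', ∀ i, S (e i) = v i := by
  classical
  have hbound := he.sum_norm_inner_mul_norm_le hv
  have hsum (x : E) : Summable fun i => ‖⟪e i, x⟫_𝕜 • v i‖ := by
    simpa only [norm_smul] using summable_of_sum_le (fun i => by positivity) (hbound x)
  let T : E →ₗ[𝕜] E' :=
    { toFun := fun x => ∑' i, ⟪e i, x⟫_𝕜 • v i
      map_add' := fun x y => by
        simp only [inner_add_right, add_smul]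
        exact (hsum x).of_norm.tsum_add (hsum y).of_norm
      map_smul' := fun c x => by
        simp only [inner_smul_right, mul_smul, RingHom.id_apply]
        exact (hsum x).of_norm.tsum_const_smul c }
  refine ⟨T.mkContinuous √(∑' i, ‖v i‖ ^ 2) fun x => ?_, fun j => ?_⟩
  · refine (norm_tsum_le_tsum_norm (hsum x)).trans (tsum_le_of_sum_le' (by positivity) ?_)
    simpa only [norm_smul] using hbound x
  · change ∑' i, ⟪e i, e j⟫_𝕜 • v i = v j
    rw [tsum_eq_single j fun i hi => by simp [orthonormal_iff_ite.1 he i j, hi]]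
    simp [he.1 j]

end Orthonormal

section Lp

variable {α ε : Type*} [MeasurableSpace α] {μ : Measure α} [TopologicalSpace ε] [ENormedAddMonoid ε]

theorem eLpNorm_two_sq_eq_lintegral (f : α → ε) :
    eLpNorm f 2 μ ^ 2 = ∫⁻ x, ‖f x‖ₑ ^ 2 ∂μ := by
  simpa using eLpNorm_nnreal_pow_eq_lintegral (f := f) (μ := μ) (p := 2) two_ne_zero

end Lp

namespace NCG

variable {H : Type*} [NormedAddCommGroup H] [InnerProductSpace ℂ H]
  {F : Type*} [MeasurableSpace F] {μ : Measure F} {h : ℕ → H} {lam : ℕ → ℝ}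
  {U : H ≃ₗᵢ[ℂ] Lp ℂ 2 μ}

/-- `𝓕_D(w)` as an `ℝ≥0∞`-valued density; unlike `FDr` it needs no summability to make sense. -/
def FDennreal (h : ℕ → H) (lam : ℕ → ℝ) (U : H ≃ₗᵢ[ℂ] Lp ℂ 2 μ) (w : ℝ → ℝ) (x : F) : ℝ≥0∞ :=
  ∑' m, ENNReal.ofReal (w (lam m)) * ‖(U (h m) : F → ℂ) x‖ₑ ^ 2

theorem lintegral_enorm_sq_apply (horth : Orthonormal ℂ h) (m : ℕ) :
    ∫⁻ x, ‖(U (h m) : F → ℂ) x‖ₑ ^ 2 ∂μ = 1 := by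
  rw [← eLpNorm_two_sq_eq_lintegral, ← Lp.enorm_def, U.enorm_map, ← ofReal_norm, horth.1 m]
  simp

theorem measurable_enorm_sq_apply (m : ℕ) : Measurable fun x => ‖(U (h m) : F → ℂ) x‖ₑ ^ 2 :=
  (Lp.stronglyMeasurable _).measurable.enorm.pow_const 2

theorem measurable_FDennreal (w : ℝ → ℝ) : Measurable (FDennreal h lam U w) :=
  Measurable.tsum fun m => (measurable_enorm_sq_apply m).const_mul _

theorem lintegral_FDennreal (horth : Orthonormal ℂ h) (w : ℝ → ℝ) :
    ∫⁻ x, FDennreal h lam U w x ∂μ = ∑' m, ENNReal.ofReal (w (lam m)) := by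
  unfold FDennreal
  rw [lintegral_tsum fun m => ((measurable_enorm_sq_apply m).const_mul _).aemeasurable]
  congr 1 with m
  rw [lintegral_const_mul' _ _ ENNReal.ofReal_ne_top, lintegral_enorm_sq_apply horth, mul_one]

variable {w : ℝ → ℝ}

theorem densMeas_eq_withDensity (horth : Orthonormal ℂ h) (hw : ∀ m, 0 ≤ w (lam m))
    (hsum : Summable fun m => w (lam m)) :
    densMeas h lam U w = μ.withDensity (FDennreal h lam U w) := by
  have hfin : ∫⁻ x, FDennreal h lam U w x ∂μ ≠ ∞ := by
    rw [lintegral_FDennreal horth, ← ENNReal.ofReal_tsum_of_nonneg hw hsum]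
    exact ENNReal.ofReal_ne_top
  refine withDensity_congr_ae ?_
  filter_upwards [ae_lt_top (measurable_FDennreal w) hfin] with x hx
  rw [← ENNReal.ofReal_toReal hx.ne, FDennreal,
    ENNReal.tsum_toReal_eq fun m => by finiteness]
  simp [FDr, ENNReal.toReal_ofReal (hw _)]

theorem lintegral_densMeas (horth : Orthonormal ℂ h) (hw : ∀ m, 0 ≤ w (lam m))
    (hsum : Summable fun m => w (lam m)) {φ : F → ℝ≥0∞} (hφ : AEMeasurable φ μ) :
    ∫⁻ x, φ x ∂densMeas h lam U w =
      ∑' m, ∫⁻ x, ENNReal.ofReal (w (lam m)) * ‖(U (h m) : F → ℂ) x‖ₑ ^ 2 * φ x ∂μ := by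
  rw [densMeas_eq_withDensity horth hw hsum,
    lintegral_withDensity_eq_lintegral_mul₀ (measurable_FDennreal w).aemeasurable hφ]
  simp only [Pi.mul_apply, FDennreal, ← ENNReal.tsum_mul_right]
  exact lintegral_tsum fun m => ((measurable_enorm_sq_apply m).const_mul _).aemeasurable.mul hφ

variable {g : ℝ → ℂ} {f : F → ℂ}

theorem eLpNorm_densMeas_sq_eq_tsum (horth : Orthonormal ℂ h)
    (hg : Summable fun m => ‖g (lam m)‖ ^ 2) (hf : AEMeasurable f μ) :
    eLpNorm f 2 (densMeas h lam U fun t => ‖g t‖ ^ 2) ^ 2 =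
      ∑' m, eLpNorm (fun x => g (lam m) * (f x * (U (h m) : F → ℂ) x)) 2 μ ^ 2 := by
  rw [eLpNorm_two_sq_eq_lintegral,
    lintegral_densMeas horth (fun m => by positivity) hg (hf.enorm.pow_const 2)]
  congr 1 with m
  rw [eLpNorm_two_sq_eq_lintegral]
  congr 1 with x
  rw [ENNReal.ofReal_pow (norm_nonneg _), ofReal_norm, enorm_mul, enorm_mul]
  ring

theorem ExtMulDiag.eLpNorm_eq {S : H →L[ℂ] H} (hS : ExtMulDiag h lam U g f S) (m : ℕ) :
    eLpNorm (fun x => g (lam m) * (f x * (U (h m) : F → ℂ) x)) 2 μ = ‖S (h m)‖ₑ := by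
  rw [← eLpNorm_congr_ae (hS m), ← Lp.enorm_def, U.enorm_map]

theorem ExtMulDiag.eLpNorm_densMeas_sq {S : H →L[ℂ] H} (hS : ExtMulDiag h lam U g f S)
    (horth : Orthonormal ℂ h) (hg : Summable fun m => ‖g (lam m)‖ ^ 2) (hf : AEMeasurable f μ) :
    eLpNorm f 2 (densMeas h lam U fun t => ‖g t‖ ^ 2) ^ 2 = ∑' m, ‖S (h m)‖ₑ ^ 2 := by
  simp only [eLpNorm_densMeas_sq_eq_tsum horth hg hf, hS.eLpNorm_eq]

theorem exists_extMulDiag_memHS [CompleteSpace H] (horth : Orthonormal ℂ h)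
    (hg : Summable fun m => ‖g (lam m)‖ ^ 2) (hf : AEStronglyMeasurable f μ)
    (hmem : MemLp f 2 (densMeas h lam U fun t => ‖g t‖ ^ 2)) :
    ∃ S : H →L[ℂ] H, ExtMulDiag h lam U g f S ∧ MemHS h S := by
  set w : ℕ → F → ℂ := fun m x => g (lam m) * (f x * (U (h m) : F → ℂ) x)
  have hfin : ∑' m, eLpNorm (w m) 2 μ ^ 2 ≠ ∞ := by
    rw [← eLpNorm_densMeas_sq_eq_tsum horth hg hf.aemeasurable]
    exact ENNReal.pow_ne_top hmem.2.ne
  have hw (m : ℕ) : MemLp (w m) 2 μ := by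
    refine ⟨aestronglyMeasurable_const.mul (hf.mul (Lp.aestronglyMeasurable _)), ?_⟩
    have : eLpNorm (w m) 2 μ ^ 2 ≠ ∞ := ne_top_of_le_ne_top hfin (ENNReal.le_tsum m)
    simpa [lt_top_iff_ne_top, ENNReal.pow_eq_top_iff] using this
  let v (m : ℕ) : H := U.symm ((hw m).toLp (w m))
  have hv (m : ℕ) : ‖v m‖ₑ = eLpNorm (w m) 2 μ := by
    rw [LinearIsometryEquiv.enorm_map, Lp.enorm_toLp]
  obtain ⟨S, hS⟩ := horth.exists_continuousLinearMap_apply_eq (v := v)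
    (summable_norm_sq_iff_tsum_enorm_sq_ne_top.2 (by simpa only [hv] using hfin))
  refine ⟨S, fun m => ?_, ?_⟩
  · simpa [hS m, v] using (hw m).coeFn_toLp
  · simpa only [MemHS, hS, summable_norm_sq_iff_tsum_enorm_sq_ne_top, hv] using hfin

theorem statement7_general
    {H : Type*} [NormedAddCommGroup H] [InnerProductSpace ℂ H] [CompleteSpace H]
    {F : Type*} [MeasurableSpace F] (μ : Measure F)
    (h : ℕ → H) (lam : ℕ → ℝ)
    (horth : Orthonormal ℂ h)
    (U : H ≃ₗᵢ[ℂ] Lp ℂ 2 μ)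
    (g : ℝ → ℂ)
    (gD : H →L[ℂ] H) (hgD : ∀ m, gD (h m) = g (lam m) • h m)
    (hgDHS : MemHS h gD)
    (f : F → ℂ) (hf : AEStronglyMeasurable f μ) :
    ((∃ S : H →L[ℂ] H, ExtMulDiag h lam U g f S ∧ MemHS h S)
        ↔ MemLp f 2 (densMeas h lam U (fun t => ‖g t‖ ^ 2))) ∧
    ∀ S : H →L[ℂ] H, ExtMulDiag h lam U g f S → MemHS h S →
      normHS h S = (eLpNorm f 2 (densMeas h lam U (fun t => ‖g t‖ ^ 2))).toReal := by
  have hg : Summable fun m => ‖g (lam m)‖ ^ 2 := by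
    simpa only [MemHS, hgD, norm_smul, horth.1, mul_one] using hgDHS
  have hnorm {S : H →L[ℂ] H} (hS : ExtMulDiag h lam U g f S) :=
    hS.eLpNorm_densMeas_sq horth hg hf.aemeasurable
  refine ⟨⟨fun ⟨S, hS, hSHS⟩ => ⟨hf.mono_ac (withDensity_absolutelyContinuous _ _), ?_⟩,
    exists_extMulDiag_memHS horth hg hf⟩, fun S hS hSHS => ?_⟩
  · have := summable_norm_sq_iff_tsum_enorm_sq_ne_top.1 hSHS
    rw [← hnorm hS] at this
    simpa [lt_top_iff_ne_top, ENNReal.pow_eq_top_iff] using this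
  · rw [normHS, ← Real.sqrt_sq ENNReal.toReal_nonneg, ← ENNReal.toReal_pow, hnorm hS,
      ← ofReal_tsum_norm_sq hSHS, ENNReal.toReal_ofReal (tsum_nonneg fun m => by positivity)]

/-- Proposition 2.1 of the paper.
Let `H` be a separable Hilbert space, `D = D*` with compact resolvent, `{h_m}` an orthonormal
eigenbasis of `D` with eigenvalues `λ_m`, and `U : H → L²(F,μ)` a unitary.  Let `g` be a bounded
Borel function such that `g(D)` is Hilbert–Schmidt, and `f` a measurable function on `F`.  Then
`T_f g(D)` (defined on the span of the `h_m`) extends to a Hilbert–Schmidt operator if and only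
if `f ∈ L²(F,μ₂)`, and in that case `‖T_f g(D)‖₂ = ‖f‖_{L²(F,μ₂)}`, where `μ₂` is the measure
with density `𝓕_D(|g|²)` with respect to `μ`. -/
theorem statement7
    {H : Type*} [NormedAddCommGroup H] [InnerProductSpace ℂ H] [CompleteSpace H]
    [TopologicalSpace.SeparableSpace H]
    {F : Type*} [MeasurableSpace F] (μ : Measure F)
    (h : ℕ → H) (lam : ℕ → ℝ)
    (horth : Orthonormal ℂ h)
    (htotal : (Submodule.span ℂ (Set.range h)).topologicalClosure = ⊤)
    (hres : Tendsto (fun m => |lam m|) atTop atTop)  -- D has compact resolvent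
    (U : H ≃ₗᵢ[ℂ] Lp ℂ 2 μ)
    (g : ℝ → ℂ) (hgmeas : Measurable g) (hgbdd : ∃ C, ∀ t, ‖g t‖ ≤ C)
    (gD : H →L[ℂ] H) (hgD : ∀ m, gD (h m) = g (lam m) • h m)
    (hgDHS : MemHS h gD)
    (f : F → ℂ) (hf : AEStronglyMeasurable f μ) :
    ((∃ S : H →L[ℂ] H, ExtMulDiag h lam U g f S ∧ MemHS h S)
        ↔ MemLp f 2 (densMeas h lam U (fun t => ‖g t‖ ^ 2))) ∧
    ∀ S : H →L[ℂ] H, ExtMulDiag h lam U g f S → MemHS h S →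
      normHS h S = (eLpNorm f 2 (densMeas h lam U (fun t => ‖g t‖ ^ 2))).toReal :=
  statement7_general μ h lam horth U g gD hgD hgDHS f hf

end NCG
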